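/- Let Γ be a finite connected digraph that is not a directed cycle, let G ≤ Aut(Γ) be bi-quasiprimitive on the vertex set, and suppose Γ is (G,s)-arc-transitive with s ≥ 4. Let G^+ be an index-2 subgroup of G having two orbits Δ and Δ' on the vertices, let H be the permutation group induced by G^+ on Δ, suppose G^+ = Diag_φ(H × H) for some φ ∈ Aut(H), and suppose H has a minimal normal subgroup R, intransitive on Δ, with R^φ ≠ R, M := R × R^φ transitive on Δ, and N := Diag_φ(M × M) a minimal normal subgroup of G. Let Γ' = (Δ, A_2) be the bipartite half on Δ and let C := C_H(R) be the centralizer of R in H. Then C is intransitive on Δ with more than two orbits, and the H-normal quotient (Γ')_C is a connected digraph that is not a directed cycle, on which H/C acts faithfully, vertex-quasiprimitively, and transitively on floor(s/2)-arcs. -/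

import Mathlib

/-!
Since `G⁺` has index two and `G` is arc-transitive, `Γ` is bipartite with parts `Δ`, `Δ'`;
every `t`-arc of `Γ'` is traced by a `2t`-arc of `Γ`, so `H` is `⌊s/2⌋`-arc-transitive, in
particular `2`-arc-transitive, on `Γ'`.

A regular normal subgroup of `H` would force `Γ'` to have out-valency one, making `H` cyclic
and hence `R^φ = R`; so `H` has none. A `φ`-invariant normal subgroup `X` of `H` lifts to the
normal subgroup `Diag_φ(X × X)` of `G`, so by bi-quasiprimitivity it is transitive on `Δ` when
nontrivial. Hence `C_H(M) = 1` (it would be transitive and centralize the transitive `M`), and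
`C = C_H(R)` is intransitive (otherwise `C^φ` would be regular).

Since `R^φ ≤ C` and `M` is transitive, `R` moves some `C`-orbit, so the kernel `K` of `H` on
the `C`-orbits meets `R` trivially: `K ≤ C`, and, `R` being non-abelian, `H/K` is
non-abelian. But a digraph with at most two vertices, or with out-valency one (a directed cycle,
or `(Γ')_C` if it had a digon, by `2`-arc-transitivity) has an abelian automorphism group.
A normal subgroup `L > C` of `H` contains `R`, hence `M`, and is transitive.
-/

namespace ArcTransDigraph

variable {V : Type*}

/-- The arc set of a digraph is asymmetric (in particular loopless). -/
def IsDigraph (A : V → V → Prop) : Prop := ∀ u v : V, A u v → ¬ A v u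

/-- Connectivity of the underlying undirected graph. -/
def Connected (A : V → V → Prop) : Prop :=
  ∀ u v : V, Relation.ReflTransGen (fun a b => A a b ∨ A b a) u v

/-- `G` consists of automorphisms of the digraph `(V, A)`. -/
def PreservesArcs (A : V → V → Prop) (G : Subgroup (Equiv.Perm V)) : Prop :=
  ∀ g ∈ G, ∀ u v : V, A u v → A (g u) (g v)

/-- `G` is transitive on vertices. -/
def VertexTransitive (G : Subgroup (Equiv.Perm V)) : Prop :=
  ∀ u v : V, ∃ g ∈ G, g u = v

/-- `p` is an `s`-arc of the digraph with arc set `A`. -/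
def IsArcSeq (A : V → V → Prop) (s : ℕ) (p : Fin (s + 1) → V) : Prop :=
  ∀ i : Fin s, A (p i.castSucc) (p i.succ)

/-- `G` is transitive on the `s`-arcs of the digraph with arc set `A`. -/
def ArcTransitive (A : V → V → Prop) (G : Subgroup (Equiv.Perm V)) (s : ℕ) : Prop :=
  ∀ p q : Fin (s + 1) → V, IsArcSeq A s p → IsArcSeq A s q →
    ∃ g ∈ G, ∀ i : Fin (s + 1), g (p i) = q i

/-- `N` is a subgroup of `G` which is normal in `G`. -/
def NormalIn (N G : Subgroup (Equiv.Perm V)) : Prop :=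
  N ≤ G ∧ ∀ g ∈ G, ∀ x ∈ N, g * x * g⁻¹ ∈ N

/-- The digraph with arc set `B` on vertex set `α` is isomorphic to the directed cycle
`C_r→`, whose vertex set is `Z_r` with arcs `(i, i+1)`. -/
def IsoDirectedCycle {α : Type*} (B : α → α → Prop) (r : ℕ) : Prop :=
  ∃ e : α ≃ ZMod r, ∀ a b : α, B a b ↔ e b = e a + 1

/-- `G` is bi-quasiprimitive on `V`: every nontrivial normal subgroup has at most two
orbits, and some normal subgroup has exactly two orbits. -/
def BiQuasiprimitive (G : Subgroup (Equiv.Perm V)) : Prop :=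
  (∀ L : Subgroup (Equiv.Perm V), NormalIn L G → L ≠ ⊥ →
    Nat.card (Quotient (MulAction.orbitRel L V)) ≤ 2) ∧
  (∃ L : Subgroup (Equiv.Perm V), NormalIn L G ∧
    Nat.card (Quotient (MulAction.orbitRel L V)) = 2)

/-- The homomorphism `G⁺ → Sym(Δ)` induced by restriction to the invariant set `Δ`;
its image is the permutation group `H` induced by `G⁺` on `Δ`. -/
def inducedHom (Δ : Set V) (Gp : Subgroup (Equiv.Perm V))
    (h : ∀ b ∈ Gp, ∀ v : V, v ∈ Δ ↔ b v ∈ Δ) : Gp →* Equiv.Perm ↥Δ where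
  toFun b := Equiv.Perm.subtypePerm (b : Equiv.Perm V) (fun v => (h (b : Equiv.Perm V) b.2 v).symm)
  map_one' := by
    ext x
    simp [Equiv.Perm.subtypePerm]
  map_mul' a b := by
    ext x
    simp [Equiv.Perm.subtypePerm]

/-- The homomorphism `G⁺ → Sym(Δ)` recording the action of `G⁺` on `Δ'` after
identifying `Δ'` with `Δ` by means of the element `g` (which maps `Δ` onto `Δ'`):
`b` is sent to the permutation `x ↦ g⁻¹(b(g x))` of `Δ`. -/
def conjHom (Δ Δ' : Set V) (Gp : Subgroup (Equiv.Perm V)) (g : Equiv.Perm V)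
    (h' : ∀ b ∈ Gp, ∀ v : V, v ∈ Δ' ↔ b v ∈ Δ')
    (hg : ∀ v : V, v ∈ Δ ↔ g v ∈ Δ') : Gp →* Equiv.Perm ↥Δ where
  toFun b := Equiv.Perm.subtypePerm (g⁻¹ * (b : Equiv.Perm V) * g)
    (by
      intro v
      have h1 := hg v
      have h2 := h' (b : Equiv.Perm V) b.2 (g v)
      have h3 := hg (g⁻¹ ((b : Equiv.Perm V) (g v)))
      simp only [Equiv.Perm.mul_apply]
      rw [h1, h2, h3]
      simp)
  map_one' := by
    ext x
    simp [Equiv.Perm.subtypePerm]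
  map_mul' a b := by
    ext x
    simp [Equiv.Perm.subtypePerm]

/-- `L` is a minimal normal subgroup of `G`. -/
def MinimalNormalIn (L G : Subgroup (Equiv.Perm V)) : Prop :=
  NormalIn L G ∧ L ≠ ⊥ ∧
    ∀ L' : Subgroup (Equiv.Perm V), NormalIn L' G → L' ≠ ⊥ → L' ≤ L → L' = L

/-- The `N`-orbit of a vertex, as a point of the orbit space `V_N`. -/
def orbMk {W : Type*} (N : Subgroup (Equiv.Perm W)) (v : W) :
    Quotient (MulAction.orbitRel N W) :=
  Quotient.mk _ v

/-- The arc set of the quotient digraph `Γ_N`. -/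
def quotArc {W : Type*} (A : W → W → Prop) (N : Subgroup (Equiv.Perm W)) :
    Quotient (MulAction.orbitRel N W) → Quotient (MulAction.orbitRel N W) → Prop :=
  fun U U' => ∃ u u' : W, orbMk N u = U ∧ orbMk N u' = U' ∧ A u u'

/-- The arc set of the bipartite half `Γ' = (Δ, A₂)`, as a relation on the
subtype `↥Δ`. -/
def subHalfArc (A : V → V → Prop) (Δ Δ' : Set V) : ↥Δ → ↥Δ → Prop :=
  fun x y => ∃ v ∈ Δ', A (x : V) v ∧ A v (y : V)

open Equiv

theorem two_lt_natCard_of_ne {β : Type*} [Finite β] {a b c : β} (hab : a ≠ b) (hac : a ≠ c)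
    (hbc : b ≠ c) : 2 < Nat.card β := by
  have := Fintype.ofFinite β
  rw [Nat.card_eq_fintype_card]
  exact Fintype.two_lt_card_iff.mpr ⟨a, b, c, hab, hac, hbc⟩

section Digraph

variable {α : Type*} {A : α → α → Prop}

theorem Connected.exists_arc_across (hA : Connected A) {S : Set α} {x y : α} (hx : x ∈ S)
    (hy : y ∉ S) : ∃ a b, A a b ∧ (a ∈ S ↔ b ∉ S) := by
  induction hA x y with
  | refl => exact absurd hx hy
  | @tail c d _ hcd ih =>
    by_cases hc : c ∈ S
    · rcases hcd with h | h
      · exact ⟨c, d, h, by tauto⟩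
      · exact ⟨d, c, h, by tauto⟩
    · exact ih hc

theorem IsArcSeq.snoc {t : ℕ} {p : Fin (t + 1) → α} {w : α} (hp : IsArcSeq A t p)
    (hw : A (p (Fin.last t)) w) : IsArcSeq A (t + 1) (Fin.snoc p w) := by
  intro i
  induction i using Fin.lastCases with
  | last => rw [Fin.succ_last, Fin.snoc_castSucc, Fin.snoc_last]; exact hw
  | cast j => rw [Fin.succ_castSucc, Fin.snoc_castSucc, Fin.snoc_castSucc]; exact hp j

theorem IsArcSeq.init {t : ℕ} {p : Fin (t + 2) → α} (hp : IsArcSeq A (t + 1) p) :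
    IsArcSeq A t (fun i => p i.castSucc) := fun i => by
  simpa only [Fin.succ_castSucc] using hp i.castSucc

theorem ArcTransitive.of_succ {G : Subgroup (Perm α)} {t : ℕ} (h : ArcTransitive A G (t + 1))
    (hout : ∀ v, ∃ w, A v w) : ArcTransitive A G t := by
  intro p q hp hq
  obtain ⟨w, hw⟩ := hout (p (Fin.last t))
  obtain ⟨w', hw'⟩ := hout (q (Fin.last t))
  obtain ⟨γ, hγ, hγpq⟩ := h _ _ (hp.snoc hw) (hq.snoc hw')
  exact ⟨γ, hγ, fun i => by simpa using hγpq i.castSucc⟩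

theorem ArcTransitive.mono {G : Subgroup (Perm α)} {s t : ℕ} (h : ArcTransitive A G s)
    (hout : ∀ v, ∃ w, A v w) (hts : t ≤ s) : ArcTransitive A G t :=
  Nat.decreasingInduction (fun _ _ h' => h'.of_succ hout) h hts

theorem ArcTransitive.exists_map_arc {G : Subgroup (Perm α)} (h : ArcTransitive A G 1)
    {u v x y : α} (huv : A u v) (hxy : A x y) : ∃ γ ∈ G, γ u = x ∧ γ v = y := by
  obtain ⟨γ, hγ, hγuv⟩ := h ![u, v] ![x, y] (fun i => by fin_cases i; simpa using huv)
    (fun i => by fin_cases i; simpa using hxy)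
  exact ⟨γ, hγ, by simpa using hγuv 0, by simpa using hγuv 1⟩

theorem VertexTransitive.exists_arc_out_in {G : Subgroup (Perm α)} (hG : VertexTransitive G)
    (hA : PreservesArcs A G) {a b : α} (hab : A a b) :
    (∀ v, ∃ w, A v w) ∧ ∀ v, ∃ w, A w v := by
  refine ⟨fun v => ?_, fun v => ?_⟩
  · obtain ⟨γ, hγ, rfl⟩ := hG a v
    exact ⟨γ b, hA γ hγ a b hab⟩
  · obtain ⟨γ, hγ, rfl⟩ := hG b v
    exact ⟨γ a, hA γ hγ a b hab⟩

/-- `hS` says that each element of `G` either preserves or swaps `S` and `Sᶜ`. -/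
theorem forall_arc_across {G : Subgroup (Perm α)} {S : Set α} (hconn : Connected A)
    (hG : ArcTransitive A G 1)
    (hS : ∀ γ ∈ G, ∀ u v, ((γ u ∈ S ↔ u ∈ S) ↔ (γ v ∈ S ↔ v ∈ S))) {x y : α} (hx : x ∈ S)
    (hy : y ∉ S) {u v : α} (huv : A u v) : u ∈ S ↔ v ∉ S := by
  obtain ⟨a, b, hab, hcross⟩ := hconn.exists_arc_across hx hy
  obtain ⟨γ, hγ, rfl, rfl⟩ := hG.exists_map_arc huv hab
  have := hS γ hγ u v
  tauto

theorem exists_forall_mem_zpowers_of_unique_out [Finite α] (hconn : Connected A)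
    (hout : ∀ a, ∃ b, A a b) (hin : ∀ b, ∃ a, A a b)
    (huniq : ∀ a b b', A a b → A a b' → b = b') :
    ∃ σ : Perm α, ∀ f : Perm α, (∀ a b, A a b → A (f a) (f b)) → f ∈ Subgroup.zpowers σ := by
  choose nxt hnxt using hout
  have hsurj : Function.Surjective nxt := fun b => by
    obtain ⟨a, ha⟩ := hin b
    exact ⟨a, huniq _ _ _ (hnxt a) ha⟩
  let σ : Perm α := Equiv.ofBijective nxt ⟨Finite.injective_iff_surjective.mpr hsurj, hsurj⟩
  have hσ : ∀ a b, A a b → σ a = b := fun a b hab => huniq _ _ _ (hnxt a) hab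
  have hsame : ∀ a b, σ.SameCycle a b := fun a b => by
    induction hconn a b with
    | refl => exact Perm.SameCycle.refl σ a
    | tail _ hcd ih =>
      rcases hcd with h | h
      · exact ih.trans ⟨1, by simpa using hσ _ _ h⟩
      · exact ih.trans (Perm.SameCycle.symm ⟨1, by simpa using hσ _ _ h⟩)
  refine ⟨σ, fun f hf => ?_⟩
  have hcomm : Commute f σ := Perm.ext fun a => (hσ _ _ (hf _ _ (hnxt a))).symm
  rcases isEmpty_or_nonempty α with hα | ⟨⟨a₀⟩⟩
  · exact Subgroup.mem_zpowers_iff.mpr ⟨0, Subsingleton.elim _ _⟩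
  obtain ⟨k, hk⟩ := hsame a₀ (f a₀)
  refine Subgroup.mem_zpowers_iff.mpr ⟨k, Perm.ext fun x => ?_⟩
  obtain ⟨m, rfl⟩ := hsame a₀ x
  rw [← Perm.mul_apply, ← Perm.mul_apply, ((Commute.refl σ).zpow_zpow k m).eq, Perm.mul_apply,
    hk, ← Perm.mul_apply, (hcomm.zpow_right m).eq, Perm.mul_apply]

theorem IsoDirectedCycle.unique_out {B : α → α → Prop} {r : ℕ} (h : IsoDirectedCycle B r)
    {a b b' : α} (hab : B a b) (hab' : B a b') : b = b' := by
  obtain ⟨e, he⟩ := h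
  exact e.injective (((he a b).mp hab).trans ((he a b').mp hab').symm)

end Digraph

section Quotient

variable {W : Type*} {B : W → W → Prop} {C H : Subgroup (Perm W)}

theorem ArcTransitive.exists_map_two_arc (h : ArcTransitive B H 2) {a b c a' b' c' : W}
    (hab : B a b) (hbc : B b c) (hab' : B a' b') (hbc' : B b' c') :
    ∃ γ ∈ H, γ a = a' ∧ γ b = b' ∧ γ c = c' := by
  obtain ⟨γ, hγ, hγabc⟩ := h ![a, b, c] ![a', b', c']
    (fun i => by fin_cases i <;> simpa) (fun i => by fin_cases i <;> simpa)
  exact ⟨γ, hγ, by simpa using hγabc 0, by simpa using hγabc 1, by simpa using hγabc 2⟩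

theorem commute_of_unique_out [Finite W] (hconn : Connected B) (hout : ∀ a, ∃ b, B a b)
    (hin : ∀ b, ∃ a, B a b) (huniq : ∀ a b b', B a b → B a b' → b = b') {f₁ f₂ : Perm W}
    (hf₁ : ∀ a b, B a b → B (f₁ a) (f₁ b)) (hf₂ : ∀ a b, B a b → B (f₂ a) (f₂ b)) :
    Commute f₁ f₂ := by
  obtain ⟨σ, hσ⟩ := exists_forall_mem_zpowers_of_unique_out hconn hout hin huniq
  obtain ⟨k₁, rfl⟩ := Subgroup.mem_zpowers_iff.mp (hσ f₁ hf₁)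
  obtain ⟨k₂, rfl⟩ := Subgroup.mem_zpowers_iff.mp (hσ f₂ hf₂)
  exact (Commute.refl σ).zpow_zpow k₁ k₂

theorem orbMk_eq_orbMk_iff (x y : W) : orbMk C x = orbMk C y ↔ ∃ c ∈ C, c y = x := by
  rw [orbMk, orbMk, Quotient.eq, MulAction.orbitRel_apply, MulAction.mem_orbit_iff]
  exact ⟨fun ⟨c, hc⟩ => ⟨c, c.2, hc⟩, fun ⟨c, hc, hcy⟩ => ⟨⟨c, hc⟩, hcy⟩⟩

theorem orbMk_apply_of_mem {c : Perm W} (hc : c ∈ C) (x : W) : orbMk C (c x) = orbMk C x :=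
  (orbMk_eq_orbMk_iff _ _).mpr ⟨c, hc, rfl⟩

theorem NormalIn.le_normalizer (hCH : NormalIn C H) :
    H ≤ Subgroup.normalizer (C : Set (Perm W)) := fun h hh => by
  refine Subgroup.mem_normalizer_iff.mpr fun c => ⟨hCH.2 h hh c, fun hc => ?_⟩
  simpa [mul_assoc] using hCH.2 h⁻¹ (H.inv_mem hh) _ hc

theorem orbMk_apply_eq_iff {h : Perm W} (hh : h ∈ Subgroup.normalizer (C : Set (Perm W)))
    (x y : W) : orbMk C (h x) = orbMk C (h y) ↔ orbMk C x = orbMk C y := by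
  simp only [orbMk_eq_orbMk_iff]
  constructor
  · rintro ⟨c, hc, hcy⟩
    refine ⟨h⁻¹ * c * h, ?_, by simp [hcy]⟩
    simpa using (Subgroup.mem_normalizer_iff.mp (Subgroup.inv_mem _ hh) c).mp hc
  · rintro ⟨c, hc, rfl⟩
    exact ⟨h * c * h⁻¹, (Subgroup.mem_normalizer_iff.mp hh c).mp hc, by simp⟩

def quotPerm (C : Subgroup (Perm W)) {h : Perm W}
    (hh : h ∈ Subgroup.normalizer (C : Set (Perm W))) : Perm (Quotient (MulAction.orbitRel C W)) :=
  Quotient.congr h fun x y => by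
    rw [← Quotient.eq, ← Quotient.eq]
    exact (orbMk_apply_eq_iff hh x y).symm

theorem quotPerm_quotArc {h : Perm W} (hh : h ∈ Subgroup.normalizer (C : Set (Perm W)))
    (hB : ∀ a b, B a b → B (h a) (h b)) (U U' : Quotient (MulAction.orbitRel C W))
    (hUU' : quotArc B C U U') : quotArc B C (quotPerm C hh U) (quotPerm C hh U') := by
  obtain ⟨u, u', rfl, rfl, huu'⟩ := hUU'
  exact ⟨h u, h u', rfl, rfl, hB _ _ huu'⟩

theorem orbMk_comm_of_commute (hCH : NormalIn C H) (hHB : PreservesArcs B H)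
    (hcomm : ∀ F₁ F₂ : Perm (Quotient (MulAction.orbitRel C W)),
      (∀ U U', quotArc B C U U' → quotArc B C (F₁ U) (F₁ U')) →
      (∀ U U', quotArc B C U U' → quotArc B C (F₂ U) (F₂ U')) → Commute F₁ F₂)
    {h₁ h₂ : Perm W} (hh₁ : h₁ ∈ H) (hh₂ : h₂ ∈ H) (x : W) :
    orbMk C (h₁ (h₂ x)) = orbMk C (h₂ (h₁ x)) := by
  have hn₁ := hCH.le_normalizer hh₁
  have hn₂ := hCH.le_normalizer hh₂
  exact Perm.congr_fun (hcomm _ _ (quotPerm_quotArc hn₁ (hHB h₁ hh₁))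
    (quotPerm_quotArc hn₂ (hHB h₂ hh₂))).eq (orbMk C x)

theorem Connected.quotArc (hB : Connected B) (C : Subgroup (Perm W)) :
    Connected (quotArc B C) := by
  rintro ⟨x⟩ ⟨y⟩
  refine (hB x y).lift (orbMk C) fun a b hab => ?_
  rcases hab with h | h
  · exact Or.inl ⟨a, b, rfl, rfl, h⟩
  · exact Or.inr ⟨b, a, rfl, rfl, h⟩

theorem exists_quotArc_out (hout : ∀ x, ∃ y, B x y) (U : Quotient (MulAction.orbitRel C W)) :
    ∃ U', quotArc B C U U' := by
  obtain ⟨x, rfl⟩ := Quotient.exists_rep U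
  obtain ⟨y, hxy⟩ := hout x
  exact ⟨orbMk C y, x, y, rfl, rfl, hxy⟩

theorem exists_quotArc_in (hin : ∀ y, ∃ x, B x y) (U : Quotient (MulAction.orbitRel C W)) :
    ∃ U', quotArc B C U' U := by
  obtain ⟨y, rfl⟩ := Quotient.exists_rep U
  obtain ⟨x, hxy⟩ := hin y
  exact ⟨orbMk C x, x, y, rfl, rfl, hxy⟩

theorem IsArcSeq.exists_lift (hC : PreservesArcs B C) {t : ℕ}
    {p : Fin (t + 1) → Quotient (MulAction.orbitRel C W)} (hp : IsArcSeq (quotArc B C) t p) :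
    ∃ x : Fin (t + 1) → W, IsArcSeq B t x ∧ ∀ i, orbMk C (x i) = p i := by
  induction t with
  | zero =>
    obtain ⟨u, hu⟩ := Quotient.exists_rep (p 0)
    exact ⟨fun _ => u, fun i => i.elim0, fun i => by rw [Fin.fin_one_eq_zero i]; exact hu⟩
  | succ n ih =>
    obtain ⟨x, hx, hxp⟩ := ih hp.init
    obtain ⟨u, u', hu, hu', huu'⟩ := hp (Fin.last n)
    obtain ⟨c, hc, hcu⟩ := (orbMk_eq_orbMk_iff (x (Fin.last n)) u).mp ((hxp _).trans hu.symm)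
    refine ⟨Fin.snoc x (c u'), hx.snoc (hcu ▸ hC c hc u u' huu'), fun i => ?_⟩
    induction i using Fin.lastCases with
    | last => rw [Fin.snoc_last, orbMk_apply_of_mem hc, hu']; rfl
    | cast j => rw [Fin.snoc_castSucc]; exact hxp j

theorem ArcTransitive.quotArc (hCH : NormalIn C H) (hHB : PreservesArcs B H) {t : ℕ}
    (hH : ArcTransitive B H t) (p q : Fin (t + 1) → Quotient (MulAction.orbitRel C W))
    (hp : IsArcSeq (quotArc B C) t p) (hq : IsArcSeq (quotArc B C) t q) :
    ∃ h ∈ H, ∀ (i : Fin (t + 1)) (x : W), orbMk C x = p i → orbMk C (h x) = q i := by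
  have hCB : PreservesArcs B C := fun c hc => hHB c (hCH.1 hc)
  obtain ⟨xp, hxp, hxpp⟩ := hp.exists_lift hCB
  obtain ⟨xq, hxq, hxqq⟩ := hq.exists_lift hCB
  obtain ⟨h, hh, hhx⟩ := hH xp xq hxp hxq
  refine ⟨h, hh, fun i x hx => ?_⟩
  rw [(orbMk_apply_eq_iff (hCH.le_normalizer hh) x (xp i)).mpr (hx.trans (hxpp i).symm), hhx,
    hxqq]

/-- A digon of `Γ_C` lifts to a `2`-arc of `Γ` that returns to its initial `C`-orbit; by
`2`-arc transitivity all `2`-arcs do, so out-neighbours in `Γ_C` are unique. -/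
theorem unique_out_quotArc_of_not_isDigraph (hCH : NormalIn C H) (hHB : PreservesArcs B H)
    (h2 : ArcTransitive B H 2) (hin : ∀ y, ∃ x, B x y) (hnd : ¬ IsDigraph (quotArc B C))
    (U U₁ U₂ : Quotient (MulAction.orbitRel C W)) (h₁ : quotArc B C U U₁)
    (h₂ : quotArc B C U U₂) : U₁ = U₂ := by
  simp only [IsDigraph, not_forall, not_not] at hnd
  obtain ⟨_, _, ⟨x, y, rfl, rfl, hxy⟩, ⟨y', z, hy', hz, hyz⟩⟩ := hnd
  obtain ⟨c, hc, rfl⟩ := (orbMk_eq_orbMk_iff y y').mp hy'.symm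
  have hret : ∀ a b d, B a b → B b d → orbMk C d = orbMk C a := fun a b d hab hbd => by
    obtain ⟨γ, hγ, ha, -, hd⟩ :=
      h2.exists_map_two_arc hxy (hHB c (hCH.1 hc) _ _ hyz) hab hbd
    rw [← ha, ← hd, orbMk_apply_eq_iff (hCH.le_normalizer hγ), orbMk_apply_of_mem hc, hz]
  obtain ⟨a₁, b₁, rfl, rfl, hab₁⟩ := h₁
  obtain ⟨a₂, b₂, ha, rfl, hab₂⟩ := h₂
  obtain ⟨c', hc', rfl⟩ := (orbMk_eq_orbMk_iff a₂ a₁).mp ha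
  obtain ⟨w, hw⟩ := hin a₁
  rw [hret _ _ _ hw hab₁, hret _ _ _ (hHB c' (hCH.1 hc') _ _ hw) hab₂, orbMk_apply_of_mem hc']

end Quotient

section PermGroup

variable {W : Type*} {H L L' M R X : Subgroup (Perm W)}

theorem NormalIn.inf (hL : NormalIn L H) (hL' : NormalIn L' H) : NormalIn (L ⊓ L') H :=
  ⟨inf_le_left.trans hL.1, fun h hh _ hx => ⟨hL.2 h hh _ hx.1, hL'.2 h hh _ hx.2⟩⟩

theorem NormalIn.sup (hL : NormalIn L H) (hL' : NormalIn L' H) : NormalIn (L ⊔ L') H := by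
  refine ⟨sup_le hL.1 hL'.1, fun h hh x hx => ?_⟩
  have hmap : (L ⊔ L').map (MulAut.conj h).toMonoidHom ≤ L ⊔ L' := by
    rw [Subgroup.map_sup]
    exact sup_le_sup (Subgroup.map_le_iff_le_comap.mpr fun y hy => hL.2 h hh y hy)
      (Subgroup.map_le_iff_le_comap.mpr fun y hy => hL'.2 h hh y hy)
  exact hmap ⟨x, hx, rfl⟩

abbrev centralizerIn (H L : Subgroup (Perm W)) : Subgroup (Perm W) :=
  H ⊓ Subgroup.centralizer (L : Set (Perm W))

theorem NormalIn.centralizerIn (hL : NormalIn L H) : NormalIn (centralizerIn H L) H := by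
  refine ⟨inf_le_left, fun h hh x ⟨hxH, hxL⟩ =>
    ⟨H.mul_mem (H.mul_mem hh hxH) (H.inv_mem hh), ?_⟩⟩
  refine Subgroup.mem_centralizer_iff.mpr fun l hl => ?_
  have hl' : h⁻¹ * l * h ∈ L := by simpa using hL.2 h⁻¹ (H.inv_mem hh) l hl
  calc l * (h * x * h⁻¹) = h * ((h⁻¹ * l * h) * x) * h⁻¹ := by group
    _ = h * (x * (h⁻¹ * l * h)) * h⁻¹ := by rw [Subgroup.mem_centralizer_iff.mp hxL _ hl']
    _ = h * x * h⁻¹ * l := by group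

theorem NormalIn.commute_of_inf_eq_bot (hL : NormalIn L H) (hL' : NormalIn L' H)
    (hbot : L ⊓ L' = ⊥) {a b : Perm W} (ha : a ∈ L) (hb : b ∈ L') : Commute a b := by
  have hab : a * b * a⁻¹ * b⁻¹ ∈ L ⊓ L' :=
    ⟨by simpa [mul_assoc] using L.mul_mem ha (hL.2 b (hL'.1 hb) a⁻¹ (L.inv_mem ha)),
      L'.mul_mem (hL'.2 a (hL.1 ha) b hb) (L'.inv_mem hb)⟩
  rw [hbot, Subgroup.mem_bot] at hab
  exact commutatorElement_eq_one_iff_commute.mp hab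

theorem MinimalNormalIn.le_of_inf_ne_bot (hR : MinimalNormalIn R H) (hL : NormalIn L H)
    (hLR : L ⊓ R ≠ ⊥) : R ≤ L :=
  hR.2.2 _ (hL.inf hR.1) hLR inf_le_right ▸ inf_le_left

theorem MinimalNormalIn.le_centralizerIn_of_not_le (hR : MinimalNormalIn R H)
    (hL : NormalIn L H) (hRL : ¬ R ≤ L) : L ≤ centralizerIn H R := by
  have hbot : L ⊓ R = ⊥ := by
    by_contra h
    exact hRL (hR.le_of_inf_ne_bot hL h)
  exact fun x hx => ⟨hL.1 hx, Subgroup.mem_centralizer_iff.mpr fun r hr =>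
    (hL.commute_of_inf_eq_bot hR.1 hbot hx hr).eq.symm⟩

theorem mem_centralizer_sup {z : Perm W} (hL : z ∈ Subgroup.centralizer (L : Set (Perm W)))
    (hL' : z ∈ Subgroup.centralizer (L' : Set (Perm W))) :
    z ∈ Subgroup.centralizer ((L ⊔ L' : Subgroup (Perm W)) : Set (Perm W)) := by
  have : L ⊔ L' ≤ Subgroup.centralizer {z} := sup_le
    (fun l hl => Subgroup.mem_centralizer_singleton_iff.mpr
      (Subgroup.mem_centralizer_iff.mp hL l hl))
    (fun l hl => Subgroup.mem_centralizer_singleton_iff.mpr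
      (Subgroup.mem_centralizer_iff.mp hL' l hl))
  exact Subgroup.mem_centralizer_iff.mpr fun l hl =>
    Subgroup.mem_centralizer_singleton_iff.mp (this hl)

/-- The image `L^φ` of `L ∩ H` under an automorphism `φ` of `H`. -/
def autImage (φ : H ≃* H) (L : Subgroup (Perm W)) : Subgroup (Perm W) :=
  Subgroup.map H.subtype (Subgroup.map φ.toMonoidHom (L.subgroupOf H))

variable {φ : H ≃* H}

theorem mem_autImage {y : Perm W} :
    y ∈ autImage φ L ↔ ∃ x : H, (x : Perm W) ∈ L ∧ (φ x : Perm W) = y := by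
  constructor
  · rintro ⟨_, ⟨x, hx, rfl⟩, rfl⟩
    exact ⟨x, Subgroup.mem_subgroupOf.mp hx, rfl⟩
  · rintro ⟨x, hx, rfl⟩
    exact ⟨φ x, ⟨x, Subgroup.mem_subgroupOf.mpr hx, rfl⟩, rfl⟩

theorem autImage_le : autImage φ L ≤ H :=
  Subgroup.map_subtype_le _

theorem card_autImage (hLH : L ≤ H) : Nat.card (autImage φ L) = Nat.card L := by
  rw [autImage, Subgroup.card_map_of_injective H.subtype_injective,
    Subgroup.card_map_of_injective φ.injective]
  exact Nat.card_congr (Subgroup.subgroupOfEquivOfLe hLH).toEquiv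

theorem NormalIn.autImage (hL : NormalIn L H) (φ : H ≃* H) : NormalIn (autImage φ L) H := by
  refine ⟨autImage_le, fun h hh y hy => ?_⟩
  obtain ⟨x, hx, rfl⟩ := mem_autImage.mp hy
  set h' := φ.symm ⟨h, hh⟩
  refine mem_autImage.mpr ⟨h' * x * h'⁻¹, by simpa using hL.2 _ h'.2 _ hx, ?_⟩
  simp [h']

theorem commute_of_mem_autImage (hLL' : ∀ a ∈ L, ∀ b ∈ L', Commute a b) {a b : Perm W}
    (ha : a ∈ autImage φ L) (hb : b ∈ autImage φ L') : Commute a b := by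
  obtain ⟨x, hx, rfl⟩ := mem_autImage.mp ha
  obtain ⟨y, hy, rfl⟩ := mem_autImage.mp hb
  have hxy : Commute x y := Subtype.ext (hLL' _ hx _ hy).eq
  exact (hxy.map φ).map H.subtype

theorem autImage_eq_self_of_isCyclic [Finite W] [IsCyclic H] (hLH : L ≤ H) :
    autImage φ L = L := by
  obtain ⟨m, hm⟩ := MonoidHom.map_cyclic φ.toMonoidHom
  refine Subgroup.eq_of_le_of_card_ge (fun y hy => ?_) (card_autImage hLH).ge
  obtain ⟨x, hx, rfl⟩ := mem_autImage.mp hy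
  have hφx : φ x = x ^ m := hm x
  rw [hφx, Subgroup.coe_zpow]
  exact L.zpow_mem hx m

def AutInvariant (φ : H ≃* H) (X : Subgroup (Perm W)) : Prop :=
  ∀ x : H, (x : Perm W) ∈ X ↔ (φ x : Perm W) ∈ X

theorem AutInvariant.centralizerIn (hXH : X ≤ H) (hX : AutInvariant φ X) :
    AutInvariant φ (centralizerIn H X) := by
  have hcomm : ∀ y : H, (∀ m ∈ X, Commute m (y : Perm W)) ↔
      ∀ m : H, (m : Perm W) ∈ X → Commute m y := fun y =>
    ⟨fun h m hm => Subtype.ext (h m hm).eq, fun h m hm => (h ⟨m, hXH hm⟩ hm).map H.subtype⟩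
  intro x
  simp only [Subgroup.mem_inf, x.2, (φ x).2, true_and, Subgroup.mem_centralizer_iff,
    ← commute_iff_eq, SetLike.mem_coe]
  rw [hcomm, hcomm]
  constructor
  · intro hx m hm
    obtain ⟨m', rfl⟩ := φ.surjective m
    exact (hx m' ((hX m').mpr hm)).map φ
  · intro hx m hm
    simpa using (hx (φ m) ((hX m).mp hm)).map φ.symm

def IsSemiregular (X : Subgroup (Perm W)) : Prop :=
  ∀ a ∈ X, ∀ x, a x = x → a = 1

theorem VertexTransitive.isSemiregular_of_commute (hM : VertexTransitive M)
    (hXM : ∀ a ∈ X, ∀ m ∈ M, Commute a m) : IsSemiregular X := by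
  intro a ha x hax
  ext y
  obtain ⟨m, hm, rfl⟩ := hM x y
  rw [Perm.one_apply, ← Perm.mul_apply, (hXM a ha m hm).eq, Perm.mul_apply, hax]

theorem VertexTransitive.card_le [Finite W] (hX : VertexTransitive X) :
    Nat.card W ≤ Nat.card X := by
  rcases isEmpty_or_nonempty W with hW | ⟨⟨x₀⟩⟩
  · simp
  refine Nat.card_le_card_of_surjective (fun a : X => (a : Perm W) x₀) fun y => ?_
  obtain ⟨a, ha, hy⟩ := hX x₀ y
  exact ⟨⟨a, ha⟩, hy⟩

theorem IsSemiregular.vertexTransitive [Finite W] (hX : IsSemiregular X)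
    (hcard : Nat.card W ≤ Nat.card X) : VertexTransitive X := by
  intro x y
  have hinj : Function.Injective fun a : X => (a : Perm W) x := fun a b hab => by
    have h1 := hX _ (b⁻¹ * a).2 x (by simp [hab])
    simpa [inv_mul_eq_one, eq_comm] using h1
  obtain ⟨a, ha⟩ := ((Nat.bijective_iff_injective_and_card _).mpr
    ⟨hinj, le_antisymm (Nat.card_le_card_of_injective _ hinj) hcard⟩).2 y
  exact ⟨a, a.2, ha⟩

end PermGroup

section BipartiteHalf

variable {A : V → V → Prop} {Δ Δ' : Set V}

theorem IsArcSeq.exists_double {t : ℕ} {p : Fin (t + 1) → Δ}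
    (hp : IsArcSeq (subHalfArc A Δ Δ') t p) :
    ∃ P : Fin (2 * t + 1) → V, IsArcSeq A (2 * t) P ∧
      ∀ k : Fin (t + 1), P ⟨2 * k, by omega⟩ = p k := by
  choose w _ hpw hwp using hp
  refine ⟨fun j => if h : j.val % 2 = 0 then p ⟨j / 2, by omega⟩ else w ⟨j / 2, by omega⟩,
    fun i => ?_, fun k => by simp⟩
  have hi := i.isLt
  have hc : (i.castSucc : Fin (2 * t + 1)).val = i := rfl
  have hs : (i.succ : Fin (2 * t + 1)).val = i + 1 := rfl
  dsimp only
  rcases Nat.mod_two_eq_zero_or_one i with h | h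
  · rw [dif_pos (by omega), dif_neg (by omega)]
    convert hpw ⟨i / 2, by omega⟩ using 3
    · simp
    · omega
  · rw [dif_neg (by omega), dif_pos (by omega)]
    convert hwp ⟨i / 2, by omega⟩ using 3
    · simp
    · simp [Fin.ext_iff]; omega

theorem exists_subHalfArc_out (hbip : ∀ u v, A u v → (u ∈ Δ ↔ v ∉ Δ))
    (hout : ∀ v, ∃ w, A v w) (x : Δ) : ∃ y, subHalfArc A Δ Δᶜ x y := by
  obtain ⟨v, hv⟩ := hout x
  obtain ⟨w, hw⟩ := hout v
  have hvΔ : v ∉ Δ := (hbip _ _ hv).mp x.2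
  exact ⟨⟨w, by have := hbip _ _ hw; tauto⟩, v, hvΔ, hv, hw⟩

theorem exists_subHalfArc_in (hbip : ∀ u v, A u v → (u ∈ Δ ↔ v ∉ Δ))
    (hin : ∀ v, ∃ w, A w v) (x : Δ) : ∃ y, subHalfArc A Δ Δᶜ y x := by
  obtain ⟨v, hv⟩ := hin x
  obtain ⟨w, hw⟩ := hin v
  have hvΔ : v ∉ Δ := by have := hbip _ _ hv; have := x.2; tauto
  exact ⟨⟨w, by have := hbip _ _ hw; tauto⟩, v, hvΔ, hw, hv⟩

theorem connected_subHalfArc (hbip : ∀ u v, A u v → (u ∈ Δ ↔ v ∉ Δ)) (hconn : Connected A)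
    (hout : ∀ v, ∃ w, A v w) (hin : ∀ v, ∃ w, A w v) : Connected (subHalfArc A Δ Δᶜ) := by
  have hanchor : ∀ v, ∃ x : Δ, (v ∈ Δ → (x : V) = v) ∧ (v ∉ Δ → A v x) := fun v => by
    by_cases hv : v ∈ Δ
    · exact ⟨⟨v, hv⟩, fun _ => rfl, fun h => absurd hv h⟩
    · obtain ⟨w, hw⟩ := hout v
      exact ⟨⟨w, by have := hbip _ _ hw; tauto⟩, fun h => absurd h hv, fun _ => hw⟩
  choose anchor hself hout' using hanchor
  have : Std.Symm fun x y => subHalfArc A Δ Δᶜ x y ∨ subHalfArc A Δ Δᶜ y x :=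
    ⟨fun _ _ h => h.symm⟩
  have harc : ∀ a b, A a b → Relation.ReflTransGen
      (fun x y => subHalfArc A Δ Δᶜ x y ∨ subHalfArc A Δ Δᶜ y x) (anchor a) (anchor b) := by
    intro a b hab
    by_cases ha : a ∈ Δ
    · have hb : b ∉ Δ := (hbip _ _ hab).mp ha
      refine .single (Or.inl ⟨b, hb, ?_, hout' b hb⟩)
      rw [hself a ha]
      exact hab
    · have hb : b ∈ Δ := by have := hbip _ _ hab; tauto
      obtain ⟨z, hz⟩ := hin a
      have hzΔ : z ∈ Δ := by have := hbip _ _ hz; tauto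
      refine .head (b := ⟨z, hzΔ⟩) (Or.inr ⟨a, ha, hz, hout' a ha⟩)
        (.single (Or.inl ⟨a, ha, hz, ?_⟩))
      rw [hself b hb]
      exact hab
  intro x y
  have hx : anchor x = x := Subtype.ext (hself x x.2)
  have hy : anchor y = y := Subtype.ext (hself y y.2)
  have := (hconn x y).lift' anchor fun a b hab =>
    hab.elim (harc a b) fun h => Std.Symm.symm _ _ (harc b a h)
  rwa [Function.onFun, hx, hy] at this

theorem PreservesArcs.subHalfArc {Gp : Subgroup (Perm V)} (hA : PreservesArcs A Gp)
    (hΔ : ∀ b ∈ Gp, ∀ v, v ∈ Δ ↔ b v ∈ Δ) :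
    PreservesArcs (subHalfArc A Δ Δᶜ) (inducedHom Δ Gp hΔ).range := by
  rintro _ ⟨b, rfl⟩ x y ⟨v, hv, hxv, hvy⟩
  exact ⟨b.1 v, fun h => hv ((hΔ b b.2 v).mpr h), hA b b.2 _ _ hxv, hA b b.2 _ _ hvy⟩

theorem ArcTransitive.subHalfArc {G Gp : Subgroup (Perm V)} {t : ℕ}
    (hΔ : ∀ b ∈ Gp, ∀ v, v ∈ Δ ↔ b v ∈ Δ) (hA : ArcTransitive A G (2 * t))
    (hGp : ∀ γ ∈ G, ∀ v ∈ Δ, γ v ∈ Δ → γ ∈ Gp) :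
    ArcTransitive (subHalfArc A Δ Δᶜ) (inducedHom Δ Gp hΔ).range t := by
  intro p q hp hq
  obtain ⟨P, hP, hPp⟩ := hp.exists_double
  obtain ⟨Q, hQ, hQq⟩ := hq.exists_double
  obtain ⟨γ, hγ, hγPQ⟩ := hA P Q hP hQ
  have h0 := hγPQ ⟨0, by omega⟩
  have hP0 := hPp 0
  have hQ0 := hQq 0
  simp only [Fin.val_zero, mul_zero] at hP0 hQ0
  rw [hP0, hQ0] at h0
  have hγGp : γ ∈ Gp := hGp γ hγ _ (p 0).2 (h0 ▸ (q 0).2)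
  refine ⟨inducedHom Δ Gp hΔ ⟨γ, hγGp⟩, ⟨_, rfl⟩, fun i => Subtype.ext ?_⟩
  have := hγPQ ⟨2 * i, by omega⟩
  rwa [hPp, hQq] at this

end BipartiteHalf

section OrbitKernel

variable {W : Type*} {C H M : Subgroup (Perm W)}

def orbitKernel (C H : Subgroup (Perm W)) : Subgroup (Perm W) where
  carrier := {h | h ∈ H ∧ ∀ x, orbMk C (h x) = orbMk C x}
  one_mem' := ⟨H.one_mem, fun _ => rfl⟩
  mul_mem' := fun ⟨ha, ha'⟩ ⟨hb, hb'⟩ =>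
    ⟨H.mul_mem ha hb, fun x => (ha' _).trans (hb' x)⟩
  inv_mem' := fun {a} ⟨ha, ha'⟩ =>
    ⟨H.inv_mem ha, fun x => by simpa using (ha' (a⁻¹ x)).symm⟩

theorem NormalIn.orbitKernel (hCH : NormalIn C H) : NormalIn (orbitKernel C H) H := by
  refine ⟨fun h hh => hh.1, fun h hh k ⟨hkH, hk⟩ =>
    ⟨H.mul_mem (H.mul_mem hh hkH) (H.inv_mem hh), fun x => ?_⟩⟩
  have := (orbMk_apply_eq_iff (hCH.le_normalizer hh) (k (h⁻¹ x)) (h⁻¹ x)).mpr (hk _)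
  simpa using this

theorem VertexTransitive.of_le_orbitKernel (hM : VertexTransitive M)
    (hMK : M ≤ orbitKernel C H) : VertexTransitive C := fun x y => by
  obtain ⟨m, hm, rfl⟩ := hM x y
  obtain ⟨c, hc, hcx⟩ := (orbMk_eq_orbMk_iff _ _).mp ((hMK hm).2 x)
  exact ⟨c, hc, hcx⟩

theorem VertexTransitive.mono (hM : VertexTransitive M) (hMC : M ≤ C) : VertexTransitive C :=
  fun x y => let ⟨m, hm, hmxy⟩ := hM x y; ⟨m, hMC hm, hmxy⟩

end OrbitKernel

section DiagonalType

variable {W : Type*} {H R : Subgroup (Perm W)} {φ : H ≃* H}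

theorem MinimalNormalIn.autImage_le_centralizerIn [Finite W] (hR : MinimalNormalIn R H)
    (hne : autImage φ R ≠ R) : autImage φ R ≤ centralizerIn H R :=
  hR.le_centralizerIn_of_not_le (hR.1.autImage φ) fun hle =>
    hne (Subgroup.eq_of_le_of_card_ge hle (card_autImage hR.1.1).le).symm

theorem centralizerIn_sup_autImage_eq_bot (hR : MinimalNormalIn R H)
    (hM : VertexTransitive (R ⊔ autImage φ R)) (hMinv : AutInvariant φ (R ⊔ autImage φ R))
    (hreg : ∀ X, NormalIn X H → VertexTransitive X → ¬ IsSemiregular X)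
    (htrans : ∀ X, NormalIn X H → X ≠ ⊥ → AutInvariant φ X → VertexTransitive X) :
    centralizerIn H (R ⊔ autImage φ R) = ⊥ := by
  by_contra hne
  have hXH := (hR.1.sup (hR.1.autImage φ)).centralizerIn
  exact hreg _ hXH (htrans _ hXH hne (hMinv.centralizerIn (sup_le hR.1.1 autImage_le)))
    (hM.isSemiregular_of_commute fun a ha m hm => (Subgroup.mem_centralizer_iff.mp ha.2 m hm).symm)

/-- If `C` were transitive, then `C^φ` would centralize `C` (their intersection centralizes
`M = R R^φ`, hence is trivial), so `C^φ` would be a regular normal subgroup of `H`. -/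
theorem not_vertexTransitive_centralizerIn [Finite W] (hR : MinimalNormalIn R H)
    (hreg : ∀ X, NormalIn X H → VertexTransitive X → ¬ IsSemiregular X)
    (hbot : centralizerIn H (R ⊔ autImage φ R) = ⊥) : ¬ VertexTransitive (centralizerIn H R) := by
  intro hC
  set C := centralizerIn H R
  have hCH : NormalIn C H := hR.1.centralizerIn
  have hDH : NormalIn (autImage φ C) H := hCH.autImage φ
  have hRC : ∀ a ∈ R, ∀ b ∈ C, Commute a b := fun a ha b hb =>
    Subgroup.mem_centralizer_iff.mp hb.2 a ha
  have hCD : C ⊓ autImage φ C = ⊥ := by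
    rw [← le_bot_iff, ← hbot]
    refine fun z hz => ⟨hz.1.1, mem_centralizer_sup hz.1.2 ?_⟩
    exact Subgroup.mem_centralizer_iff.mpr fun y hy => (commute_of_mem_autImage hRC hy hz.2).eq
  have hsemi : IsSemiregular (autImage φ C) :=
    hC.isSemiregular_of_commute fun a ha m hm => (hCH.commute_of_inf_eq_bot hDH hCD hm ha).symm
  refine hreg _ hDH (hsemi.vertexTransitive ?_) hsemi
  rw [card_autImage hCH.1]
  exact hC.card_le

theorem not_le_orbitKernel [Finite W] (hR : MinimalNormalIn R H) (hne : autImage φ R ≠ R)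
    (hM : VertexTransitive (R ⊔ autImage φ R)) (hC : ¬ VertexTransitive (centralizerIn H R)) :
    ¬ R ≤ orbitKernel (centralizerIn H R) H := fun hRK =>
  hC (hM.of_le_orbitKernel (sup_le hRK fun _ hy =>
    ⟨autImage_le hy, orbMk_apply_of_mem (hR.autImage_le_centralizerIn hne hy)⟩))

theorem orbitKernel_le_centralizerIn [Finite W] (hR : MinimalNormalIn R H)
    (hne : autImage φ R ≠ R) (hM : VertexTransitive (R ⊔ autImage φ R))
    (hC : ¬ VertexTransitive (centralizerIn H R)) :
    orbitKernel (centralizerIn H R) H ≤ centralizerIn H R :=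
  hR.le_centralizerIn_of_not_le hR.1.centralizerIn.orbitKernel (not_le_orbitKernel hR hne hM hC)

theorem orbitKernel_inf_eq_bot [Finite W] (hR : MinimalNormalIn R H) (hne : autImage φ R ≠ R)
    (hM : VertexTransitive (R ⊔ autImage φ R)) (hC : ¬ VertexTransitive (centralizerIn H R)) :
    orbitKernel (centralizerIn H R) H ⊓ R = ⊥ := by
  by_contra h
  exact not_le_orbitKernel hR hne hM hC (hR.le_of_inf_ne_bot hR.1.centralizerIn.orbitKernel h)

/-- Otherwise all commutators of `R` would lie in the kernel on the `C`-orbits, which meets `R`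
trivially; then `R` would be abelian, so `M = R R^φ ≤ C` and `C` would be transitive. -/
theorem not_forall_orbMk_comm [Finite W] (hR : MinimalNormalIn R H) (hne : autImage φ R ≠ R)
    (hM : VertexTransitive (R ⊔ autImage φ R)) (hC : ¬ VertexTransitive (centralizerIn H R)) :
    ¬ ∀ h₁ ∈ H, ∀ h₂ ∈ H, ∀ x : W,
      orbMk (centralizerIn H R) (h₁ (h₂ x)) = orbMk (centralizerIn H R) (h₂ (h₁ x)) := by
  intro hcomm
  have hab : ∀ a ∈ R, ∀ b ∈ R, Commute a b := fun a ha b hb => by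
    have hK : a * b * a⁻¹ * b⁻¹ ∈ orbitKernel (centralizerIn H R) H ⊓ R := by
      refine ⟨⟨H.mul_mem (H.mul_mem (H.mul_mem (hR.1.1 ha) (hR.1.1 hb)) (H.inv_mem (hR.1.1 ha)))
        (H.inv_mem (hR.1.1 hb)), fun x => ?_⟩,
        R.mul_mem (R.mul_mem (R.mul_mem ha hb) (R.inv_mem ha)) (R.inv_mem hb)⟩
      simpa using hcomm a (hR.1.1 ha) b (hR.1.1 hb) (a⁻¹ (b⁻¹ x))
    rw [orbitKernel_inf_eq_bot hR hne hM hC, Subgroup.mem_bot] at hK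
    exact commutatorElement_eq_one_iff_commute.mp hK
  exact hC (hM.mono (sup_le (fun r hr => ⟨hR.1.1 hr, Subgroup.mem_centralizer_iff.mpr
    fun a ha => (hab a ha r hr).eq⟩) (hR.autImage_le_centralizerIn hne)))

theorem not_forall_commute_quotArc [Finite W] {B : W → W → Prop} (hR : MinimalNormalIn R H)
    (hne : autImage φ R ≠ R) (hM : VertexTransitive (R ⊔ autImage φ R))
    (hC : ¬ VertexTransitive (centralizerIn H R)) (hHB : PreservesArcs B H) :
    ¬ ∀ F₁ F₂ : Perm (Quotient (MulAction.orbitRel (centralizerIn H R) W)),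
      (∀ U U', quotArc B _ U U' → quotArc B _ (F₁ U) (F₁ U')) →
      (∀ U U', quotArc B _ U U' → quotArc B _ (F₂ U) (F₂ U')) → Commute F₁ F₂ := fun h =>
  not_forall_orbMk_comm hR hne hM hC fun _ hh₁ _ hh₂ x =>
    orbMk_comm_of_commute hR.1.centralizerIn hHB h hh₁ hh₂ x

theorem vertexTransitive_of_centralizerIn_lt [Finite W] (hR : MinimalNormalIn R H)
    (hne : autImage φ R ≠ R) (hM : VertexTransitive (R ⊔ autImage φ R))
    {L : Subgroup (Perm W)} (hL : NormalIn L H) (hCL : centralizerIn H R < L) :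
    VertexTransitive L := by
  have hRL : R ≤ L := by
    by_contra h
    exact hCL.not_ge (hR.le_centralizerIn_of_not_le hL h)
  exact hM.mono (sup_le hRL ((hR.autImage_le_centralizerIn hne).trans hCL.le))

end DiagonalType

section RegularNormal

variable {W : Type*} {B : W → W → Prop} {H X : Subgroup (Perm W)}

/-- The stabilizer of the `2`-arc `(u, v, c v)`, where `c ∈ X` maps `u` to `v`, centralizes `c`
by semiregularity, so it fixes `c v`. -/
theorem unique_out_of_isSemiregular (hin : ∀ y, ∃ x, B x y) (hHB : PreservesArcs B H)
    (h2 : ArcTransitive B H 2) (hX : NormalIn X H) (hXt : VertexTransitive X)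
    (hXs : IsSemiregular X) (v w w' : W) (hw : B v w) (hw' : B v w') : w = w' := by
  obtain ⟨u, hu⟩ := hin v
  obtain ⟨c, hc, hcu⟩ := hXt u v
  have hvc : B v (c v) := hcu ▸ hHB c (hX.1 hc) u v hu
  suffices h : ∀ z, B v z → z = c v from (h w hw).trans (h w' hw').symm
  intro z hz
  obtain ⟨γ, hγ, hγu, hγv, rfl⟩ := h2.exists_map_two_arc hu hvc hu hz
  have hfix : (c⁻¹ * (γ * c * γ⁻¹)) u = u := by
    have hγu' : γ⁻¹ u = u := by rw [Perm.inv_eq_iff_eq, hγu]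
    rw [Perm.mul_apply, Perm.mul_apply, Perm.mul_apply, hγu', hcu, hγv, Perm.inv_eq_iff_eq, hcu]
  have hcomm : γ * c * γ⁻¹ = c :=
    (inv_mul_eq_one.mp (hXs _ (X.mul_mem (X.inv_mem hc) (hX.2 γ hγ c hc)) u hfix)).symm
  calc γ (c v) = (γ * c * γ⁻¹) (γ v) := by simp
    _ = c v := by rw [hcomm, hγv]

theorem isCyclic_of_unique_out [Finite W] (hconn : Connected B) (hout : ∀ x, ∃ y, B x y)
    (hin : ∀ y, ∃ x, B x y) (huniq : ∀ v w w', B v w → B v w' → w = w')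
    (hHB : PreservesArcs B H) : IsCyclic H := by
  obtain ⟨σ, hσ⟩ := exists_forall_mem_zpowers_of_unique_out hconn hout hin huniq
  exact Subgroup.isCyclic_of_le fun h hh => hσ h (hHB h hh)

theorem not_isSemiregular_of_autImage_ne [Finite W] {R : Subgroup (Perm W)} {φ : H ≃* H}
    (hconn : Connected B) (hout : ∀ x, ∃ y, B x y) (hin : ∀ y, ∃ x, B x y)
    (hHB : PreservesArcs B H) (h2 : ArcTransitive B H 2) (hRH : R ≤ H)
    (hne : autImage φ R ≠ R) (hX : NormalIn X H) (hXt : VertexTransitive X) :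
    ¬ IsSemiregular X := fun hXs => by
  have := isCyclic_of_unique_out hconn hout hin
    (unique_out_of_isSemiregular hin hHB h2 hX hXt hXs) hHB
  exact hne (autImage_eq_self_of_isCyclic hRH)

end RegularNormal

section IndexTwo

variable {P : Type*} [Group P] {K G : Subgroup P}

theorem mul_mem_iff_of_index_subgroupOf_eq_two (h : (K.subgroupOf G).index = 2) {a b : P}
    (ha : a ∈ G) (hb : b ∈ G) : a * b ∈ K ↔ (a ∈ K ↔ b ∈ K) := by
  simpa [Subgroup.mem_subgroupOf] using
    Subgroup.mul_mem_iff_of_index_two h (a := ⟨a, ha⟩) (b := ⟨b, hb⟩)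

theorem conj_mem_of_index_subgroupOf_eq_two (h : (K.subgroupOf G).index = 2) (hKG : K ≤ G)
    {a b : P} (ha : a ∈ G) (hb : b ∈ K) : a * b * a⁻¹ ∈ K := by
  rw [mul_mem_iff_of_index_subgroupOf_eq_two h (G.mul_mem ha (hKG hb)) (G.inv_mem ha),
    mul_mem_iff_of_index_subgroupOf_eq_two h ha (hKG hb), inv_mem_iff]
  simp [hb]

end IndexTwo

section Diagonal

variable {G Gp : Subgroup (Perm V)} {Δ Δ' : Set V} {g : Perm V}

theorem mem_iff_apply_mem_iff (hidx : (Gp.subgroupOf G).index = 2)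
    (hΔ : ∀ b ∈ Gp, ∀ v : V, v ∈ Δ ↔ b v ∈ Δ) (hgswap : ∀ v, v ∈ Δ ↔ g v ∉ Δ) (hgG : g ∈ G)
    (hgnot : g ∉ Gp) {γ : Perm V} (hγ : γ ∈ G) (v : V) : γ ∈ Gp ↔ (γ v ∈ Δ ↔ v ∈ Δ) := by
  by_cases hγGp : γ ∈ Gp
  · simp [hγGp, ← hΔ γ hγGp]
  have hγg : γ * g⁻¹ ∈ Gp := by
    rw [mul_mem_iff_of_index_subgroupOf_eq_two hidx hγ (G.inv_mem hgG), inv_mem_iff]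
    tauto
  have : γ v = (γ * g⁻¹) (g v) := by simp
  rw [this, ← hΔ _ hγg]
  have := hgswap v
  tauto

/-- The subgroup `Diag_φ(X × X)` of `G⁺`: the elements whose restriction to `Δ` lies in `X`. -/
def liftSubgroup (Δ : Set V) (Gp : Subgroup (Perm V)) (hΔ : ∀ b ∈ Gp, ∀ v : V, v ∈ Δ ↔ b v ∈ Δ)
    (X : Subgroup (Perm Δ)) : Subgroup (Perm V) :=
  Subgroup.map Gp.subtype (Subgroup.comap (inducedHom Δ Gp hΔ) X)

variable {hΔ : ∀ b ∈ Gp, ∀ v : V, v ∈ Δ ↔ b v ∈ Δ} {X : Subgroup (Perm Δ)}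

theorem mem_liftSubgroup {b : Perm V} (hb : b ∈ Gp) :
    b ∈ liftSubgroup Δ Gp hΔ X ↔ inducedHom Δ Gp hΔ ⟨b, hb⟩ ∈ X := by
  simp [liftSubgroup, hb]

theorem liftSubgroup_le : liftSubgroup Δ Gp hΔ X ≤ Gp :=
  Subgroup.map_subtype_le _

/-- `G⁺ = Diag_φ(H × H)`: conjugation by `g`, which swaps `Δ` and `Δ'`, induces `φ` on `H`. -/
def IsDiagonal (Δ Δ' : Set V) (Gp : Subgroup (Perm V)) (g : Perm V)
    (hΔ : ∀ b ∈ Gp, ∀ v : V, v ∈ Δ ↔ b v ∈ Δ) (hΔ' : ∀ b ∈ Gp, ∀ v : V, v ∈ Δ' ↔ b v ∈ Δ')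
    (hgswap : ∀ v : V, v ∈ Δ ↔ g v ∈ Δ')
    (φ : (inducedHom Δ Gp hΔ).range ≃* (inducedHom Δ Gp hΔ).range) : Prop :=
  ∀ b : Gp, (conjHom Δ Δ' Gp g hΔ' hgswap b : Perm Δ) =
    ((φ ⟨inducedHom Δ Gp hΔ b, MonoidHom.mem_range.mpr ⟨b, rfl⟩⟩ :
      (inducedHom Δ Gp hΔ).range) : Perm Δ)

variable {hΔ' : ∀ b ∈ Gp, ∀ v : V, v ∈ Δ' ↔ b v ∈ Δ'} {hgswap : ∀ v : V, v ∈ Δ ↔ g v ∈ Δ'}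
  {φ : (inducedHom Δ Gp hΔ).range ≃* (inducedHom Δ Gp hΔ).range}

theorem IsDiagonal.inducedHom_conj (hdiag : IsDiagonal Δ Δ' Gp g hΔ hΔ' hgswap φ) (b : Gp)
    (hb : g⁻¹ * b * g ∈ Gp) :
    (inducedHom Δ Gp hΔ ⟨g⁻¹ * b * g, hb⟩ : Perm Δ) = φ ⟨inducedHom Δ Gp hΔ b, b, rfl⟩ :=
  hdiag b

theorem IsDiagonal.autInvariant (hdiag : IsDiagonal Δ Δ' Gp g hΔ hΔ' hgswap φ)
    (hidx : (Gp.subgroupOf G).index = 2) (hGpG : Gp ≤ G) (hgG : g ∈ G)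
    (hN : NormalIn (liftSubgroup Δ Gp hΔ X) G) : AutInvariant φ X := by
  rintro ⟨_, b, rfl⟩
  have hb : g⁻¹ * b * g ∈ Gp := by
    simpa using conj_mem_of_index_subgroupOf_eq_two hidx hGpG (G.inv_mem hgG) b.2
  rw [← hdiag.inducedHom_conj b hb, ← mem_liftSubgroup hb]
  refine (mem_liftSubgroup b.2).symm.trans ⟨fun h => ?_, fun h => ?_⟩
  · simpa using hN.2 g⁻¹ (G.inv_mem hgG) _ h
  · simpa [mul_assoc] using hN.2 g hgG _ h

theorem IsDiagonal.normalIn_liftSubgroup (hdiag : IsDiagonal Δ Δ' Gp g hΔ hΔ' hgswap φ)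
    (hidx : (Gp.subgroupOf G).index = 2) (hGpG : Gp ≤ G) (hgG : g ∈ G) (hgnot : g ∉ Gp)
    (hX : NormalIn X (inducedHom Δ Gp hΔ).range) (hinv : AutInvariant φ X) :
    NormalIn (liftSubgroup Δ Gp hΔ X) G := by
  set L := liftSubgroup Δ Gp hΔ X
  have hGp : ∀ c ∈ Gp, ∀ x ∈ L, c * x * c⁻¹ ∈ L := by
    intro c hc x hx
    have hxGp := liftSubgroup_le hx
    rw [mem_liftSubgroup (Gp.mul_mem (Gp.mul_mem hc hxGp) (Gp.inv_mem hc))]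
    have e : inducedHom Δ Gp hΔ ⟨c * x * c⁻¹, Gp.mul_mem (Gp.mul_mem hc hxGp) (Gp.inv_mem hc)⟩ =
        inducedHom Δ Gp hΔ ⟨c, hc⟩ * inducedHom Δ Gp hΔ ⟨x, hxGp⟩ *
          (inducedHom Δ Gp hΔ ⟨c, hc⟩)⁻¹ := by
      rw [← map_inv, ← map_mul, ← map_mul]
      rfl
    rw [e]
    exact hX.2 _ ⟨⟨c, hc⟩, rfl⟩ _ ((mem_liftSubgroup hxGp).mp hx)
  have hg : ∀ x ∈ L, g * x * g⁻¹ ∈ L := by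
    intro x hx
    have hxGp := liftSubgroup_le hx
    have hy : g * x * g⁻¹ ∈ Gp := conj_mem_of_index_subgroupOf_eq_two hidx hGpG hgG hxGp
    have hyx : g⁻¹ * (g * x * g⁻¹) * g = x := by group
    rw [mem_liftSubgroup hy]
    refine (hinv ⟨_, ⟨_, hy⟩, rfl⟩).mpr ?_
    rw [← hdiag.inducedHom_conj ⟨_, hy⟩ (by convert hxGp using 1)]
    convert (mem_liftSubgroup hxGp).mp hx using 2
    exact Subtype.ext hyx
  refine ⟨liftSubgroup_le.trans hGpG, fun a ha x hx => ?_⟩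
  by_cases haGp : a ∈ Gp
  · exact hGp a haGp x hx
  have hag : a * g⁻¹ ∈ Gp := by
    rw [mul_mem_iff_of_index_subgroupOf_eq_two hidx ha (G.inv_mem hgG), inv_mem_iff]
    tauto
  simpa [mul_assoc] using hGp _ hag _ (hg x hx)

/-- `Diag_φ(X × X)` is a nontrivial normal subgroup of `G` fixing `Δ` setwise, so it has at most
two orbits, one of which meets `Δᶜ`. -/
theorem BiQuasiprimitive.vertexTransitive [Finite V] (hbqp : BiQuasiprimitive G)
    (hN : NormalIn (liftSubgroup Δ Gp hΔ X) G) (hX : X ≠ ⊥)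
    (hXH : X ≤ (inducedHom Δ Gp hΔ).range) {w : V} (hw : w ∉ Δ) : VertexTransitive X := by
  set L := liftSubgroup Δ Gp hΔ X
  have hL : L ≠ ⊥ := by
    obtain ⟨⟨x, hxX⟩, hx1⟩ := Subgroup.ne_bot_iff_exists_ne_one.mp hX
    obtain ⟨b, rfl⟩ := hXH hxX
    intro hbot
    have hbL : (b : Perm V) ∈ L := (mem_liftSubgroup b.2).mpr hxX
    rw [hbot, Subgroup.mem_bot] at hbL
    exact hx1 (Subtype.ext (by simp [show b = 1 from Subtype.ext hbL]))
  have hsame : ∀ u v : V, orbMk L u = orbMk L v → (u ∈ Δ ↔ v ∈ Δ) := fun u v h => by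
    obtain ⟨c, hc, rfl⟩ := (orbMk_eq_orbMk_iff _ _).mp h
    exact (hΔ c (liftSubgroup_le hc) v).symm
  intro x y
  by_contra hxy
  have hxy' : orbMk L (x : V) ≠ orbMk L y := fun h => by
    obtain ⟨c, hc, hcy⟩ := (orbMk_eq_orbMk_iff _ _).mp h.symm
    exact hxy ⟨_, (mem_liftSubgroup (liftSubgroup_le hc)).mp hc, Subtype.ext hcy⟩
  have := hbqp.1 L hN hL
  exact this.not_gt (two_lt_natCard_of_ne hxy' (fun h => hw ((hsame _ _ h).mp x.2))
    (fun h => hw ((hsame _ _ h).mp y.2)))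

end Diagonal

theorem biquasiprimitive_case_d_quotient_general
    [Finite V] (A : V → V → Prop) (G Gp : Subgroup (Equiv.Perm V)) (s : ℕ)
    (Δ Δ' : Set V) (g : Equiv.Perm V)
    (hconn : Connected A) (hAut : PreservesArcs A G)
    (hvt : VertexTransitive G) (hs : 4 ≤ s) (hat : ArcTransitive A G s)
    (hbqp : BiQuasiprimitive G)
    (hGpG : Gp ≤ G) (hidx : (Gp.subgroupOf G).index = 2)
    -- Δ and Δ' are the two orbits of G⁺ on the vertex set
    (hdis : Disjoint Δ Δ') (hcov : Δ ∪ Δ' = Set.univ)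
    (hΔ : ∀ b ∈ Gp, ∀ v : V, v ∈ Δ ↔ b v ∈ Δ)
    (hΔ' : ∀ b ∈ Gp, ∀ v : V, v ∈ Δ' ↔ b v ∈ Δ')
    (hgG : g ∈ G) (hgnot : g ∉ Gp)
    (hgswap : ∀ v : V, v ∈ Δ ↔ g v ∈ Δ')
    -- G⁺ = Diag_φ(H × H), where H = (inducedHom Δ Gp hΔ).range is the permutation
    -- group induced by G⁺ on Δ
    (φ : (inducedHom Δ Gp hΔ).range ≃* (inducedHom Δ Gp hΔ).range)
    (hdiag : ∀ b : Gp,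
      (conjHom Δ Δ' Gp g hΔ' hgswap b : Equiv.Perm ↥Δ) =
        ((φ ⟨inducedHom Δ Gp hΔ b, MonoidHom.mem_range.mpr ⟨b, rfl⟩⟩ :
          (inducedHom Δ Gp hΔ).range) : Equiv.Perm ↥Δ))
    -- R is a minimal normal subgroup of H which is intransitive on Δ
    (R : Subgroup (Equiv.Perm ↥Δ))
    (hRmin : MinimalNormalIn R (inducedHom Δ Gp hΔ).range)
    (hRintrans : ¬ ∀ x y : ↥Δ, ∃ a ∈ R, a x = y)
    -- Rφ is the image R^φ of R under φ, and R^φ ≠ R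
    (Rφ : Subgroup (Equiv.Perm ↥Δ))
    (hRφ : Rφ = Subgroup.map (inducedHom Δ Gp hΔ).range.subtype
      (Subgroup.map φ.toMonoidHom (R.subgroupOf (inducedHom Δ Gp hΔ).range)))
    (hRφne : Rφ ≠ R)
    -- M = R × R^φ is transitive on Δ
    (M : Subgroup (Equiv.Perm ↥Δ)) (hM : M = R ⊔ Rφ)
    (hMtrans : ∀ x y : ↥Δ, ∃ m ∈ M, m x = y)
    -- N = Diag_φ(M × M), i.e. the subgroup of G⁺ consisting of the elements whose
    -- induced permutation of Δ lies in M, is a minimal normal subgroup of G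
    (N : Subgroup (Equiv.Perm V))
    (hN : N = Subgroup.map Gp.subtype (Subgroup.comap (inducedHom Δ Gp hΔ) M))
    (hNmin : MinimalNormalIn N G)
    -- C = C_H(R) is the centralizer of R in H
    (C : Subgroup (Equiv.Perm ↥Δ))
    (hC : C = (inducedHom Δ Gp hΔ).range ⊓
      Subgroup.centralizer (R : Set (Equiv.Perm ↥Δ))) :
    -- C is intransitive on Δ with more than two orbits
    (3 ≤ Nat.card (Quotient (MulAction.orbitRel C ↥Δ))) ∧
    -- the H-normal quotient (Γ')_C of the bipartite half Γ' = (Δ, A₂) is a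
    -- connected digraph which is not a directed cycle
    IsDigraph (quotArc (subHalfArc A Δ Δ') C) ∧
    Connected (quotArc (subHalfArc A Δ Δ') C) ∧
    (∀ r : ℕ, 3 ≤ r → ¬ IsoDirectedCycle (quotArc (subHalfArc A Δ Δ') C) r) ∧
    -- H/C acts faithfully on (Γ')_C
    (∀ h ∈ (inducedHom Δ Gp hΔ).range,
      (∀ x : ↥Δ, orbMk C (h x) = orbMk C x) → h ∈ C) ∧
    -- H/C is vertex-transitive on (Γ')_C
    (∀ U U' : Quotient (MulAction.orbitRel C ↥Δ),
      ∃ h ∈ (inducedHom Δ Gp hΔ).range,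
        ∀ x : ↥Δ, orbMk C x = U → orbMk C (h x) = U') ∧
    -- H/C is vertex-quasiprimitive on (Γ')_C: every nontrivial normal subgroup
    -- L/C of H/C (with C < L ⊴ H) is transitive on the C-orbits
    (∀ L : Subgroup (Equiv.Perm ↥Δ), NormalIn L (inducedHom Δ Gp hΔ).range →
      C ≤ L → C ≠ L → ∀ x y : ↥Δ, ∃ l ∈ L, orbMk C (l x) = orbMk C y) ∧
    -- H/C is transitive on the ⌊s/2⌋-arcs of (Γ')_C
    (∀ p q : Fin (s / 2 + 1) → Quotient (MulAction.orbitRel C ↥Δ),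
      IsArcSeq (quotArc (subHalfArc A Δ Δ') C) (s / 2) p →
      IsArcSeq (quotArc (subHalfArc A Δ Δ') C) (s / 2) q →
      ∃ h ∈ (inducedHom Δ Gp hΔ).range,
        ∀ (i : Fin (s / 2 + 1)) (x : ↥Δ), orbMk C x = p i → orbMk C (h x) = q i) := by
  obtain rfl : Δ' = Δᶜ := (isCompl_iff.mpr ⟨hdis, codisjoint_iff.mpr hcov⟩).compl_eq.symm
  change IsDiagonal Δ Δᶜ Gp g hΔ hΔ' hgswap φ at hdiag
  change Rφ = autImage φ R at hRφ
  subst hRφ hM hN hC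
  obtain ⟨x₀, -⟩ := not_forall.mp hRintrans
  have hgx₀ : g x₀ ∉ Δ := (hgswap x₀).mp x₀.2
  have hmemGp : ∀ γ ∈ G, ∀ v, γ ∈ Gp ↔ (γ v ∈ Δ ↔ v ∈ Δ) := fun γ hγ =>
    mem_iff_apply_mem_iff hidx hΔ hgswap hgG hgnot hγ
  obtain ⟨a, b, hab, -⟩ := hconn.exists_arc_across x₀.2 hgx₀
  obtain ⟨hout, hin⟩ := hvt.exists_arc_out_in hAut hab
  have hbip : ∀ u v, A u v → (u ∈ Δ ↔ v ∉ Δ) := fun u v huv =>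
    forall_arc_across hconn (hat.mono hout (by omega))
      (fun γ hγ u v => by rw [← hmemGp γ hγ u, ← hmemGp γ hγ v]) x₀.2 hgx₀ huv
  have hBconn := connected_subHalfArc hbip hconn hout hin
  have hBout := exists_subHalfArc_out hbip hout
  have hBin := exists_subHalfArc_in hbip hin
  have hHB := PreservesArcs.subHalfArc (fun γ hγ => hAut γ (hGpG hγ)) hΔ
  have hHt : ∀ t, 2 * t ≤ s → ArcTransitive (subHalfArc A Δ Δᶜ) (inducedHom Δ Gp hΔ).range t :=
    fun t ht => ArcTransitive.subHalfArc hΔ (hat.mono hout ht)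
      fun γ hγ v hv hγv => (hmemGp γ hγ v).mpr (iff_of_true hγv hv)
  have hreg : ∀ X, NormalIn X _ → VertexTransitive X → ¬ IsSemiregular X := fun _ hX =>
    not_isSemiregular_of_autImage_ne hBconn hBout hBin hHB (hHt 2 (by omega)) hRmin.1.1 hRφne hX
  have htrans : ∀ X, NormalIn X _ → X ≠ ⊥ → AutInvariant φ X → VertexTransitive X :=
    fun X hX hne hinv =>
      hbqp.vertexTransitive (hdiag.normalIn_liftSubgroup hidx hGpG hgG hgnot hX hinv) hne hX.1 hgx₀
  have hCt := not_vertexTransitive_centralizerIn hRmin hreg (centralizerIn_sup_autImage_eq_bot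
    hRmin hMtrans (hdiag.autInvariant hidx hGpG hgG hNmin.1) hreg htrans)
  have hCH := hRmin.1.centralizerIn
  have hnc := not_forall_commute_quotArc hRmin hRφne hMtrans hCt hHB
  have huniq := fun h => hnc fun _ _ h₁ h₂ => commute_of_unique_out (hBconn.quotArc _)
    (exists_quotArc_out hBout) (exists_quotArc_in hBin) h h₁ h₂
  refine ⟨?_, ?_, hBconn.quotArc _, fun r _ hcyc => huniq fun _ _ _ => hcyc.unique_out,
    fun h hh hfix => orbitKernel_le_centralizerIn hRmin hRφne hMtrans hCt ⟨hh, hfix⟩,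
    fun U U' => ?_, fun L hL hCL hne x y => ?_,
    ArcTransitive.quotArc hCH hHB (hHt (s / 2) (Nat.mul_div_le s 2))⟩
  · refine not_lt.mp fun hlt => hnc fun F₁ F₂ _ _ => ?_
    exact (Perm.isMulCommutative_iff_card_le_two.mpr (Nat.lt_succ_iff.mp hlt)).is_comm.comm F₁ F₂
  · by_contra hnd
    exact huniq (unique_out_quotArc_of_not_isDigraph hCH hHB (hHt 2 (by omega)) hBin hnd)
  · obtain ⟨h, hh, hUU'⟩ := ArcTransitive.quotArc hCH hHB (hHt 0 (by omega)) (fun _ => U)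
      (fun _ => U') (fun i => i.elim0) (fun i => i.elim0)
    exact ⟨h, hh, hUU' 0⟩
  · obtain ⟨l, hl, rfl⟩ := vertexTransitive_of_centralizerIn_lt hRmin hRφne hMtrans hL
      (lt_of_le_of_ne hCL hne) x y
    exact ⟨l, hl, rfl⟩

theorem biquasiprimitive_case_d_quotient
    [Finite V] (A : V → V → Prop) (G Gp : Subgroup (Equiv.Perm V)) (s : ℕ)
    (Δ Δ' : Set V) (g : Equiv.Perm V)
    (hdig : IsDigraph A) (hconn : Connected A) (hAut : PreservesArcs A G)
    (hvt : VertexTransitive G) (hs : 4 ≤ s) (hat : ArcTransitive A G s)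
    (hnotcyc : ∀ r : ℕ, 3 ≤ r → ¬ IsoDirectedCycle A r)
    (hbqp : BiQuasiprimitive G)
    (hGpG : Gp ≤ G) (hidx : (Gp.subgroupOf G).index = 2)
    -- Δ and Δ' are the two orbits of G⁺ on the vertex set
    (hdis : Disjoint Δ Δ') (hcov : Δ ∪ Δ' = Set.univ)
    (hΔ : ∀ b ∈ Gp, ∀ v : V, v ∈ Δ ↔ b v ∈ Δ)
    (hΔ' : ∀ b ∈ Gp, ∀ v : V, v ∈ Δ' ↔ b v ∈ Δ')
    (htransΔ : ∀ u ∈ Δ, ∀ v ∈ Δ, ∃ b ∈ Gp, b u = v)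
    (htransΔ' : ∀ u ∈ Δ', ∀ v ∈ Δ', ∃ b ∈ Gp, b u = v)
    (hgG : g ∈ G) (hgnot : g ∉ Gp)
    (hgswap : ∀ v : V, v ∈ Δ ↔ g v ∈ Δ') (hg2 : g * g ∈ Gp)
    -- G⁺ = Diag_φ(H × H), where H = (inducedHom Δ Gp hΔ).range is the permutation
    -- group induced by G⁺ on Δ
    (φ : (inducedHom Δ Gp hΔ).range ≃* (inducedHom Δ Gp hΔ).range)
    (hdiag : ∀ b : Gp,
      (conjHom Δ Δ' Gp g hΔ' hgswap b : Equiv.Perm ↥Δ) =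
        ((φ ⟨inducedHom Δ Gp hΔ b, MonoidHom.mem_range.mpr ⟨b, rfl⟩⟩ :
          (inducedHom Δ Gp hΔ).range) : Equiv.Perm ↥Δ))
    -- R is a minimal normal subgroup of H which is intransitive on Δ
    (R : Subgroup (Equiv.Perm ↥Δ))
    (hRmin : MinimalNormalIn R (inducedHom Δ Gp hΔ).range)
    (hRintrans : ¬ ∀ x y : ↥Δ, ∃ a ∈ R, a x = y)
    -- Rφ is the image R^φ of R under φ, and R^φ ≠ R
    (Rφ : Subgroup (Equiv.Perm ↥Δ))
    (hRφ : Rφ = Subgroup.map (inducedHom Δ Gp hΔ).range.subtype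
      (Subgroup.map φ.toMonoidHom (R.subgroupOf (inducedHom Δ Gp hΔ).range)))
    (hRφne : Rφ ≠ R)
    -- M = R × R^φ is transitive on Δ
    (M : Subgroup (Equiv.Perm ↥Δ)) (hM : M = R ⊔ Rφ)
    (hMtrans : ∀ x y : ↥Δ, ∃ m ∈ M, m x = y)
    -- N = Diag_φ(M × M), i.e. the subgroup of G⁺ consisting of the elements whose
    -- induced permutation of Δ lies in M, is a minimal normal subgroup of G
    (N : Subgroup (Equiv.Perm V))
    (hN : N = Subgroup.map Gp.subtype (Subgroup.comap (inducedHom Δ Gp hΔ) M))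
    (hNmin : MinimalNormalIn N G)
    -- C = C_H(R) is the centralizer of R in H
    (C : Subgroup (Equiv.Perm ↥Δ))
    (hC : C = (inducedHom Δ Gp hΔ).range ⊓
      Subgroup.centralizer (R : Set (Equiv.Perm ↥Δ))) :
    -- C is intransitive on Δ with more than two orbits
    (3 ≤ Nat.card (Quotient (MulAction.orbitRel C ↥Δ))) ∧
    -- the H-normal quotient (Γ')_C of the bipartite half Γ' = (Δ, A₂) is a
    -- connected digraph which is not a directed cycle
    IsDigraph (quotArc (subHalfArc A Δ Δ') C) ∧
    Connected (quotArc (subHalfArc A Δ Δ') C) ∧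
    (∀ r : ℕ, 3 ≤ r → ¬ IsoDirectedCycle (quotArc (subHalfArc A Δ Δ') C) r) ∧
    -- H/C acts faithfully on (Γ')_C
    (∀ h ∈ (inducedHom Δ Gp hΔ).range,
      (∀ x : ↥Δ, orbMk C (h x) = orbMk C x) → h ∈ C) ∧
    -- H/C is vertex-transitive on (Γ')_C
    (∀ U U' : Quotient (MulAction.orbitRel C ↥Δ),
      ∃ h ∈ (inducedHom Δ Gp hΔ).range,
        ∀ x : ↥Δ, orbMk C x = U → orbMk C (h x) = U') ∧
    -- H/C is vertex-quasiprimitive on (Γ')_C: every nontrivial normal subgroup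
    -- L/C of H/C (with C < L ⊴ H) is transitive on the C-orbits
    (∀ L : Subgroup (Equiv.Perm ↥Δ), NormalIn L (inducedHom Δ Gp hΔ).range →
      C ≤ L → C ≠ L → ∀ x y : ↥Δ, ∃ l ∈ L, orbMk C (l x) = orbMk C y) ∧
    -- H/C is transitive on the ⌊s/2⌋-arcs of (Γ')_C
    (∀ p q : Fin (s / 2 + 1) → Quotient (MulAction.orbitRel C ↥Δ),
      IsArcSeq (quotArc (subHalfArc A Δ Δ') C) (s / 2) p →
      IsArcSeq (quotArc (subHalfArc A Δ Δ') C) (s / 2) q →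
      ∃ h ∈ (inducedHom Δ Gp hΔ).range,
        ∀ (i : Fin (s / 2 + 1)) (x : ↥Δ), orbMk C x = p i → orbMk C (h x) = q i) :=
  biquasiprimitive_case_d_quotient_general A G Gp s Δ Δ' g hconn hAut hvt hs hat hbqp hGpG hidx hdis
    hcov hΔ hΔ' hgG hgnot hgswap φ hdiag R hRmin hRintrans Rφ hRφ hRφne M hM hMtrans N hN hNmin C hC


end ArcTransDigraph
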